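/- Let F ∈ S_{G,Λ} and E ∈ E(S_{G,Λ}). Then E ≤ F in the natural partial order if and only if for every (μ,e_G,μ) ∈ E there exists a (unique) triple of the form (ξ,g,ξ) ∈ F such that {(μ,e_G,μ)} ≤ {(ξ,g,ξ)}. -/

import Mathlib

/-- A `k`-graph: a countable small category with degree functor to `ℕ^k`
satisfying the unique factorization property.  Objects (vertices) are
identified with the paths of degree `0`. -/
structure KGraph (k : ℕ) where
  Path : Type
  countable : Countable Path
  src : Path → Path
  rng : Path → Path
  deg : Path → Fin k → ℕ
  comp : (μ ν : Path) → src μ = rng ν → Path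
  deg_src : ∀ μ, deg (src μ) = 0
  deg_rng : ∀ μ, deg (rng μ) = 0
  src_vtx : ∀ μ, deg μ = 0 → src μ = μ
  rng_vtx : ∀ μ, deg μ = 0 → rng μ = μ
  src_comp : ∀ μ ν h, src (comp μ ν h) = src ν
  rng_comp : ∀ μ ν h, rng (comp μ ν h) = rng μ
  deg_comp : ∀ μ ν h, deg (comp μ ν h) = deg μ + deg ν
  comp_assoc : ∀ μ ν ρ (h1 : src μ = rng ν) (h2 : src (comp μ ν h1) = rng ρ)
    (h3 : src ν = rng ρ) (h4 : src μ = rng (comp ν ρ h3)),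
    comp (comp μ ν h1) ρ h2 = comp μ (comp ν ρ h3) h4
  rng_id_comp : ∀ μ (h : src (rng μ) = rng μ), comp (rng μ) μ h = μ
  comp_src_id : ∀ μ (h : src μ = rng (src μ)), comp μ (src μ) h = μ
  factor : ∀ μ (m n : Fin k → ℕ), deg μ = m + n →
    ∃! p : Path × Path, ∃ h : src p.1 = rng p.2,
      deg p.1 = m ∧ deg p.2 = n ∧ comp p.1 p.2 h = μ

namespace KGraph

variable {k : ℕ}

/-- The set `Λ^min(μ,ν)` of pairs `(α,β)` with `μα = νβ` a minimal common
extension of `μ` and `ν`. -/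
def lmin (Λ : KGraph k) (μ ν : Λ.Path) : Set (Λ.Path × Λ.Path) :=
  {p | ∃ (h1 : Λ.src μ = Λ.rng p.1) (h2 : Λ.src ν = Λ.rng p.2),
    Λ.comp μ p.1 h1 = Λ.comp ν p.2 h2 ∧
    Λ.deg μ + Λ.deg p.1 = Λ.deg μ ⊔ Λ.deg ν}

/-- `Λ` is finitely aligned when every `Λ^min(μ,ν)` is finite. -/
def FinitelyAligned (Λ : KGraph k) : Prop := ∀ μ ν : Λ.Path, (Λ.lmin μ ν).Finite

/-- `X ⊆ vΛ` is exhaustive: every path with range `v` has a minimal common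
extension with some member of `X`. -/
def Exhaustive (Λ : KGraph k) (v : Λ.Path) (X : Set Λ.Path) : Prop :=
  ∀ lam : Λ.Path, Λ.rng lam = v → ∃ τ ∈ X, Λ.lmin lam τ ≠ ∅

/-- `Λ` is row finite: finitely many edges of each colour into each vertex. -/
def RowFinite (Λ : KGraph k) : Prop :=
  ∀ v : Λ.Path, Λ.deg v = 0 → ∀ i : Fin k,
    {e : Λ.Path | Λ.deg e = Pi.single i 1 ∧ Λ.rng e = v}.Finite

/-- `Λ` has no sources: every vertex receives an edge of each colour. -/
def NoSources (Λ : KGraph k) : Prop :=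
  ∀ v : Λ.Path, Λ.deg v = 0 → ∀ i : Fin k,
    {e : Λ.Path | Λ.deg e = Pi.single i 1 ∧ Λ.rng e = v}.Nonempty

end KGraph

/-- A self-similar `k`-graph `(G,Λ,φ)`. -/
structure SelfSimilar (k : ℕ) (G : Type) [Group G] (Λ : KGraph k) where
  act : G → Λ.Path → Λ.Path
  φ : G → Λ.Path → G
  act_one : ∀ μ, act 1 μ = μ
  act_mul : ∀ g h μ, act (g * h) μ = act g (act h μ)
  deg_act : ∀ g μ, Λ.deg (act g μ) = Λ.deg μ
  src_act : ∀ g μ, Λ.src (act g μ) = act g (Λ.src μ)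
  rng_act : ∀ g μ, Λ.rng (act g μ) = act g (Λ.rng μ)
  φ_mul : ∀ g h μ, φ (g * h) μ = φ g (act h μ) * φ h μ
  act_comp : ∀ g μ ν (h : Λ.src μ = Λ.rng ν)
      (h' : Λ.src (act g μ) = Λ.rng (act (φ g μ) ν)),
      act g (Λ.comp μ ν h) = Λ.comp (act g μ) (act (φ g μ) ν) h'
  φ_comp : ∀ g μ ν (h : Λ.src μ = Λ.rng ν),
      φ g (Λ.comp μ ν h) = φ (φ g μ) ν
  φ_vtx : ∀ g v, Λ.deg v = 0 → φ g v = g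

variable {k : ℕ} {G : Type} [Group G] {Λ : KGraph k}

/-- Orthogonality of two triples: `Λ^min(μ,ξ) = Λ^min(ν,η) = ∅`. -/
def Orth (Λ : KGraph k) (t u : Λ.Path × G × Λ.Path) : Prop :=
  Λ.lmin t.1 u.1 = ∅ ∧ Λ.lmin t.2.2 u.2.2 = ∅

/-- Membership in `S_{G,Λ}`: a finite set of pairwise orthogonal triples
`(μ,g,ν)` with `s(μ) = g⬝s(ν)`. -/
def IsElem (SS : SelfSimilar k G Λ) (F : Set (Λ.Path × G × Λ.Path)) : Prop :=
  F.Finite ∧ (∀ t ∈ F, Λ.src t.1 = SS.act t.2.1 (Λ.src t.2.2)) ∧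
    ∀ t ∈ F, ∀ u ∈ F, t ≠ u → Orth Λ t u

/-- The multiplication of `S_{G,Λ}`. -/
def smul (SS : SelfSimilar k G Λ) (E F : Set (Λ.Path × G × Λ.Path)) :
    Set (Λ.Path × G × Λ.Path) :=
  {t | ∃ μ g ν ξ h η α β, (μ, g, ν) ∈ E ∧ (ξ, h, η) ∈ F ∧ (α, β) ∈ Λ.lmin ν ξ ∧
    ∃ (h1 : Λ.src μ = Λ.rng (SS.act g α)) (h2 : Λ.src η = Λ.rng (SS.act h⁻¹ β)),
      t = (Λ.comp μ (SS.act g α) h1,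
           SS.φ g α * SS.φ h (SS.act h⁻¹ β),
           Λ.comp η (SS.act h⁻¹ β) h2)}

/-- The involution `F* = {(ν,g⁻¹,μ) : (μ,g,ν) ∈ F}`. -/
def sstar (F : Set (Λ.Path × G × Λ.Path)) : Set (Λ.Path × G × Λ.Path) :=
  {t | (t.2.2, t.2.1⁻¹, t.1) ∈ F}

/-- The singleton idempotent `ι_μ = {(μ,e_G,μ)}`. -/
def iota (Λ : KGraph k) (G : Type) [Group G] (μ : Λ.Path) :
    Set (Λ.Path × G × Λ.Path) := {(μ, (1 : G), μ)}

/-- Idempotents of `S_{G,Λ}`. -/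
def IsIdem (SS : SelfSimilar k G Λ) (E : Set (Λ.Path × G × Λ.Path)) : Prop :=
  IsElem SS E ∧ smul SS E E = E

/-- The natural partial order of the inverse semigroup `S_{G,Λ}`:
`s ≤ t` iff `s = te` for some idempotent `e`. -/
def leS (SS : SelfSimilar k G Λ) (s t : Set (Λ.Path × G × Λ.Path)) : Prop :=
  ∃ E, IsIdem SS E ∧ smul SS t E = s

/-- `τ` is strongly fixed by `g`. -/
def StronglyFixed (SS : SelfSimilar k G Λ) (g : G) (τ : Λ.Path) : Prop :=
  SS.act g τ = τ ∧ SS.φ g τ = 1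

/-- The set `SF_g` of paths strongly fixed by `g`. -/
def SFg (SS : SelfSimilar k G Λ) (g : G) : Set Λ.Path :=
  {τ | SS.act g τ = τ ∧ SS.φ g τ = 1}

/-- `SF_g` is locally exhausted. -/
def LocallyExhausted (SS : SelfSimilar k G Λ) (g : G) : Prop :=
  ∀ v : Λ.Path, Λ.deg v = 0 →
    ∃ M : Set Λ.Path, M.Finite ∧ (∀ τ ∈ M, τ ∈ SFg SS g ∧ Λ.rng τ = v) ∧
      ∀ τ ∈ SFg SS g, Λ.rng τ = v → ∃ τ' ∈ M, Λ.lmin τ τ' ≠ ∅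

/-- The principal ideal `J_F` admits a finite cover. -/
def HasFiniteCover (SS : SelfSimilar k G Λ) (F : Set (Λ.Path × G × Λ.Path)) : Prop :=
  ∃ C : Set (Set (Λ.Path × G × Λ.Path)), C.Finite ∧
    (∀ E ∈ C, IsIdem SS E ∧ smul SS F E = E) ∧
    ∀ E, IsIdem SS E → smul SS F E = E → E ≠ ∅ → ∃ E' ∈ C, smul SS E E' ≠ ∅

/-- A (proper, nonzero) filter in the idempotent semilattice `E(S_{G,Λ})`. -/
def IsFilterE (SS : SelfSimilar k G Λ) (𝓕 : Set (Set (Λ.Path × G × Λ.Path))) : Prop :=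
  𝓕.Nonempty ∧ (∀ E ∈ 𝓕, IsIdem SS E) ∧ (∅ ∉ 𝓕) ∧
    (∀ E ∈ 𝓕, ∀ F ∈ 𝓕, smul SS E F ∈ 𝓕) ∧
    ∀ E ∈ 𝓕, ∀ F, IsIdem SS F → smul SS F E = E → F ∈ 𝓕

/-- An ultrafilter: a maximal filter in `E(S_{G,Λ})`. -/
def IsUltrafilterE (SS : SelfSimilar k G Λ) (𝓕 : Set (Set (Λ.Path × G × Λ.Path))) : Prop :=
  IsFilterE SS 𝓕 ∧ ∀ 𝓖, IsFilterE SS 𝓖 → 𝓕 ⊆ 𝓖 → 𝓖 = 𝓕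

/-- `n ≤ m` for `m ∈ (ℕ ∪ {∞})^k` and `n ∈ ℕ^k`. -/
def LeDeg {k : ℕ} (m : Fin k → ℕ∞) (n : Fin k → ℕ) : Prop :=
  ∀ i, (n i : ℕ∞) ≤ m i

/-- A boundary path `x` of a finitely aligned `k`-graph, recorded via its
degree `d(x) ∈ (ℕ∪{∞})^k` and its initial segments `x(0,n)` for `n ≤ d(x)`. -/
structure BoundaryPath (Λ : KGraph k) where
  bdeg : Fin k → ℕ∞
  seg : (Fin k → ℕ) → Λ.Path
  deg_seg : ∀ n, LeDeg bdeg n → Λ.deg (seg n) = n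
  rng_seg : ∀ n, LeDeg bdeg n → Λ.rng (seg n) = seg 0
  seg_comp : ∀ m n : Fin k → ℕ, LeDeg bdeg (m + n) →
    ∃ (τ : Λ.Path) (h : Λ.src (seg m) = Λ.rng τ),
      Λ.deg τ = n ∧ seg (m + n) = Λ.comp (seg m) τ h
  seg_junk : ∀ n, ¬ LeDeg bdeg n → seg n = seg 0
  boundary : ∀ n, LeDeg bdeg n → ∀ X : Set Λ.Path, X.Finite →
    (∀ τ ∈ X, Λ.rng τ = Λ.src (seg n) ∧ τ ≠ Λ.src (seg n)) →
    KGraph.Exhaustive Λ (Λ.src (seg n)) X →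
    ∃ τ ∈ X, ∃ (_ : LeDeg bdeg (n + Λ.deg τ)) (h : Λ.src (seg n) = Λ.rng τ),
      seg (n + Λ.deg τ) = Λ.comp (seg n) τ h

/-- `z = σ^n(x)`, the shift of the boundary path `x` by `n`. -/
def IsShift (Λ : KGraph k) (x : BoundaryPath Λ) (n : Fin k → ℕ)
    (z : BoundaryPath Λ) : Prop :=
  (∀ i, z.bdeg i = x.bdeg i - (n i : ℕ∞)) ∧
    ∀ p, LeDeg z.bdeg p → ∃ h : Λ.src (x.seg n) = Λ.rng (z.seg p),
      x.seg (n + p) = Λ.comp (x.seg n) (z.seg p) h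

/-- `z = g⬝x` for boundary paths. -/
def IsActB (SS : SelfSimilar k G Λ) (g : G) (x z : BoundaryPath Λ) : Prop :=
  z.bdeg = x.bdeg ∧ ∀ p, LeDeg x.bdeg p → z.seg p = SS.act g (x.seg p)

/-- `y = lam⬝z`, the concatenation of a finite path with a boundary path. -/
def IsCompB (Λ : KGraph k) (lam : Λ.Path) (z y : BoundaryPath Λ) : Prop :=
  (∀ i, y.bdeg i = (Λ.deg lam i : ℕ∞) + z.bdeg i) ∧
    ∀ p, LeDeg z.bdeg p → ∃ h : Λ.src lam = Λ.rng (z.seg p),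
      y.seg (Λ.deg lam + p) = Λ.comp lam (z.seg p) h

/-- `x ∈ Z(lam)`, i.e. `x(0,d(lam)) = lam`. -/
def InZ (Λ : KGraph k) (x : BoundaryPath Λ) (lam : Λ.Path) : Prop :=
  LeDeg x.bdeg (Λ.deg lam) ∧ x.seg (Λ.deg lam) = lam

/-- `y` is a fixed point for `θ_{{(μ,g,ν)}}`: `y ∈ Z(ν)` and `μ(g⬝σ^{d(ν)}(y)) = y`. -/
def FixedPt (SS : SelfSimilar k G Λ) (μ : Λ.Path) (g : G) (ν : Λ.Path)
    (y : BoundaryPath Λ) : Prop :=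
  InZ Λ y ν ∧ ∃ z w, IsShift Λ y (Λ.deg ν) z ∧ IsActB SS g z w ∧ IsCompB Λ μ w y

/-- `y` is an interior fixed point for `θ_{{(μ,g,ν)}}`: some cylinder containing
`y` consists entirely of fixed points. -/
def InteriorFixedPt (SS : SelfSimilar k G Λ) (μ : Λ.Path) (g : G) (ν : Λ.Path)
    (y : BoundaryPath Λ) : Prop :=
  ∃ η : Λ.Path, InZ Λ y η ∧ ∀ y', InZ Λ y' η → FixedPt SS μ g ν y'

/-- `G`-aperiodic condition (A). -/
def CondA (SS : SelfSimilar k G Λ) : Prop :=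
  ∀ v : Λ.Path, Λ.deg v = 0 → ∃ x : BoundaryPath Λ, x.seg 0 = v ∧
    ∀ (m n : Fin k → ℕ), LeDeg x.bdeg m → LeDeg x.bdeg n →
      ∀ (g : G) (z w : BoundaryPath Λ),
        IsShift Λ x m z → IsShift Λ x n w → IsActB SS g w z → m = n

/-- `(G,Λ)` is `G`-cofinal. -/
def GCofinal (SS : SelfSimilar k G Λ) : Prop :=
  ∀ v : Λ.Path, Λ.deg v = 0 → ∀ x : BoundaryPath Λ,
    ∃ n : Fin k → ℕ, LeDeg x.bdeg n ∧ ∃ (g : G) (p : Λ.Path),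
      Λ.rng p = v ∧ Λ.src p = SS.act g (Λ.src (x.seg n))

/-- The ultrafilter `F_x` associated to a boundary path `x`. -/
def Fx (SS : SelfSimilar k G Λ) (x : BoundaryPath Λ) :
    Set (Set (Λ.Path × G × Λ.Path)) :=
  {E | IsIdem SS E ∧ ∃ n : Fin k → ℕ, LeDeg x.bdeg n ∧
    (x.seg n, (1 : G), x.seg n) ∈ E}

/-! An idempotent `E` consists of diagonal triples `(μ, e_G, μ)`: a triple of `EE` extends on both
sides a triple of `E`, so by orthogonality it is that triple, which forces the extending paths to be
vertices. The product `{(ξ, g, ξ)} ⬝ {(μ, e_G, μ)}` contains `(μ, e_G, μ)` exactly when `μ = ξτ` with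
`τ` strongly fixed by `g`; the minimal common extensions of `ξ` and `ξτ` are forced to be `(τ, s(τ))`.
Given `FE = E`, each `(μ, e_G, μ) ∈ E` thus arises from some `(ξ, g, ξ) ∈ F`, unique because two such
`ξ` have the common extension `μ` and the triples of `F` are pairwise orthogonal. Conversely, a product
of `(ξ', g', ν) ∈ F` with `(ξτ, e_G, ξτ) ∈ E` has a common extension of `ν` and `ξ`, so again
`(ξ', g', ν) = (ξ, g, ξ)` and the product is `(ξτ, e_G, ξτ)` itself. -/

namespace KGraph

theorem comp_congr {μ ν α β : Λ.Path} (e1 : μ = ν) (e2 : α = β)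
    (h : Λ.src μ = Λ.rng α) (h' : Λ.src ν = Λ.rng β) :
    Λ.comp μ α h = Λ.comp ν β h' := by
  subst e1 e2; rfl

theorem comp_of_deg_eq_zero {μ α : Λ.Path} (hd : Λ.deg α = 0) (h : Λ.src μ = Λ.rng α) :
    Λ.comp μ α h = μ := by
  have hα : Λ.src μ = α := h.trans (Λ.rng_vtx α hd)
  subst hα
  exact Λ.comp_src_id _ h

theorem deg_eq_zero_of_comp_eq_self {μ α : Λ.Path} {h : Λ.src μ = Λ.rng α}
    (he : Λ.comp μ α h = μ) : Λ.deg α = 0 := by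
  have hd := Λ.deg_comp μ α h
  rw [he] at hd
  exact add_eq_left.mp hd.symm

theorem comp_inj {μ ν α β : Λ.Path} {h : Λ.src μ = Λ.rng α} {h' : Λ.src ν = Λ.rng β}
    (hdeg : Λ.deg μ = Λ.deg ν) (heq : Λ.comp μ α h = Λ.comp ν β h') : μ = ν ∧ α = β := by
  obtain ⟨p, -, hu⟩ := Λ.factor (Λ.comp μ α h) (Λ.deg μ) (Λ.deg α) (Λ.deg_comp μ α h)
  have hdβ : Λ.deg β = Λ.deg α := by
    have hd := Λ.deg_comp ν β h'
    rw [← heq, Λ.deg_comp, hdeg] at hd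
    exact (add_left_cancel hd).symm
  have e := (hu (μ, α) ⟨h, rfl, rfl, rfl⟩).trans (hu (ν, β) ⟨h', hdeg.symm, hdβ, heq.symm⟩).symm
  exact Prod.mk.inj e

theorem exists_comp_eq_of_comp_eq {ζ η ρ σ : Λ.Path} {hζ : Λ.src ζ = Λ.rng η}
    {hρ : Λ.src ρ = Λ.rng σ} (hle : Λ.deg ζ ≤ Λ.deg ρ) (he : Λ.comp ρ σ hρ = Λ.comp ζ η hζ) :
    ∃ (c : Λ.Path) (hc : Λ.src ζ = Λ.rng c),
      Λ.deg c = Λ.deg ρ - Λ.deg ζ ∧ Λ.comp ζ c hc = ρ := by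
  obtain ⟨⟨ζ', c⟩, ⟨hζc, hdζ', hdc, hcomp⟩, -⟩ :=
    Λ.factor ρ (Λ.deg ζ) (Λ.deg ρ - Λ.deg ζ) (add_tsub_cancel_of_le hle).symm
  have hcσ : Λ.src c = Λ.rng σ := by
    rw [← Λ.src_comp ζ' c hζc, hcomp]; exact hρ
  have hζ'cσ : Λ.src ζ' = Λ.rng (Λ.comp c σ hcσ) := by rw [Λ.rng_comp]; exact hζc
  have hassoc : Λ.comp ζ' (Λ.comp c σ hcσ) hζ'cσ = Λ.comp ζ η hζ := by
    rw [← Λ.comp_assoc ζ' c σ hζc (hcomp.symm ▸ hρ) hcσ hζ'cσ, ← he]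
    exact comp_congr hcomp rfl _ _
  obtain ⟨rfl, -⟩ := comp_inj hdζ' hassoc
  exact ⟨c, hζc, hdc, hcomp⟩

/-- The initial segment of degree `d(ξ) ∨ d(ξ')` of a common extension is a minimal one. -/
theorem lmin_nonempty_of_comp_eq {ξ ξ' α β : Λ.Path} {h : Λ.src ξ = Λ.rng α}
    {h' : Λ.src ξ' = Λ.rng β} (he : Λ.comp ξ α h = Λ.comp ξ' β h') :
    (Λ.lmin ξ ξ').Nonempty := by
  set s := Λ.deg ξ ⊔ Λ.deg ξ'
  set χ := Λ.comp ξ α h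
  have hsχ : s ≤ Λ.deg χ := by
    refine sup_le ?_ ?_
    · rw [Λ.deg_comp]; exact le_self_add
    · rw [he, Λ.deg_comp]; exact le_self_add
  obtain ⟨⟨ρ, σ⟩, ⟨hρσ, hdρ, -, hcomp⟩, -⟩ :=
    Λ.factor χ s (Λ.deg χ - s) (add_tsub_cancel_of_le hsχ).symm
  dsimp only at hρσ hdρ hcomp
  obtain ⟨a, ha, hda, hca⟩ := exists_comp_eq_of_comp_eq (hdρ ▸ le_sup_left) hcomp
  obtain ⟨b, hb, -, hcb⟩ := exists_comp_eq_of_comp_eq (hdρ ▸ le_sup_right) (hcomp.trans he)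
  refine ⟨(a, b), ha, hb, hca.trans hcb.symm, ?_⟩
  rw [hda, hdρ]
  exact add_tsub_cancel_of_le le_sup_left

theorem mem_lmin_comp (ξ τ : Λ.Path) (h : Λ.src ξ = Λ.rng τ) :
    (τ, Λ.src τ) ∈ Λ.lmin ξ (Λ.comp ξ τ h) := by
  have hs : Λ.src (Λ.comp ξ τ h) = Λ.rng (Λ.src τ) := by
    rw [Λ.src_comp, Λ.rng_vtx _ (Λ.deg_src τ)]
  refine ⟨h, hs, (comp_of_deg_eq_zero (Λ.deg_src τ) hs).symm, ?_⟩
  rw [Λ.deg_comp]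
  exact (sup_eq_right.mpr le_self_add).symm

theorem eq_of_mem_lmin_comp {ξ τ α β : Λ.Path} {h : Λ.src ξ = Λ.rng τ}
    (hab : (α, β) ∈ Λ.lmin ξ (Λ.comp ξ τ h)) : α = τ ∧ Λ.deg β = 0 := by
  obtain ⟨hα, hβ, he, hd⟩ := hab
  dsimp only at hα hβ he hd
  rw [Λ.deg_comp, sup_eq_right.mpr le_self_add] at hd
  have hdβ : Λ.deg β = 0 := by
    have hdeg := congrArg Λ.deg he
    rw [Λ.deg_comp, Λ.deg_comp, Λ.deg_comp, hd] at hdeg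
    exact add_eq_left.mp hdeg.symm
  rw [comp_of_deg_eq_zero hdβ hβ] at he
  exact ⟨(comp_inj rfl he).2, hdβ⟩

end KGraph

open KGraph

theorem SelfSimilar.φ_one (SS : SelfSimilar k G Λ) (μ : Λ.Path) : SS.φ 1 μ = 1 := by
  have h := SS.φ_mul 1 1 μ
  rw [one_mul, SS.act_one] at h
  exact right_eq_mul.mp h

theorem Set.Pairwise.eq_of_lmin_fst_nonempty {H : Type} {F : Set (Λ.Path × H × Λ.Path)}
    (hF : F.Pairwise (Orth Λ)) {t u : Λ.Path × H × Λ.Path} (ht : t ∈ F) (hu : u ∈ F)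
    (h : (Λ.lmin t.1 u.1).Nonempty) : t = u :=
  by_contra fun hne => h.ne_empty (hF ht hu hne).1

theorem Set.Pairwise.eq_of_lmin_snd_nonempty {H : Type} {F : Set (Λ.Path × H × Λ.Path)}
    (hF : F.Pairwise (Orth Λ)) {t u : Λ.Path × H × Λ.Path} (ht : t ∈ F) (hu : u ∈ F)
    (h : (Λ.lmin t.2.2 u.2.2).Nonempty) : t = u :=
  by_contra fun hne => h.ne_empty (hF ht hu hne).2

def diagTriples (Λ : KGraph k) (G : Type) [Group G] : Set (Λ.Path × G × Λ.Path) :=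
  Set.range fun μ => (μ, 1, μ)

theorem iota_subset_diagTriples (μ : Λ.Path) : iota Λ G μ ⊆ diagTriples Λ G :=
  Set.singleton_subset_iff.mpr ⟨μ, rfl⟩

theorem subset_diagTriples_of_smul_self {SS : SelfSimilar k G Λ}
    {E : Set (Λ.Path × G × Λ.Path)} (horth : E.Pairwise (Orth Λ)) (hidem : smul SS E E = E) :
    E ⊆ diagTriples Λ G := by
  intro t ht
  obtain ⟨μ, g, ν, ξ, h, η, α, β, hμ, hξ, ⟨hα, hβ, habeq, -⟩, h1, h2, rfl⟩ :=
    hidem.symm ▸ ht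
  dsimp only at hα hβ habeq
  have e1 := horth.eq_of_lmin_fst_nonempty hμ ht ⟨_, mem_lmin_comp μ _ h1⟩
  have e2 := horth.eq_of_lmin_snd_nonempty hξ ht ⟨_, mem_lmin_comp η _ h2⟩
  simp only [Prod.mk.injEq] at e1 e2
  obtain ⟨eμ, eg, eν⟩ := e1
  obtain ⟨eξ, eh, eη⟩ := e2
  have hdα : Λ.deg α = 0 := by rw [← SS.deg_act g]; exact deg_eq_zero_of_comp_eq_self eμ.symm
  have hdβ : Λ.deg β = 0 := by rw [← SS.deg_act h⁻¹]; exact deg_eq_zero_of_comp_eq_self eη.symm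
  rw [comp_of_deg_eq_zero hdα, comp_of_deg_eq_zero hdβ] at habeq
  have hνμ : ν = μ := by rw [habeq, eξ, ← eμ]
  have hhg : h = g := eh.trans eg.symm
  have hg : g = 1 := by
    rw [hhg, SS.φ_vtx g α hdα, SS.φ_vtx g _ (by rw [SS.deg_act]; exact hdβ)] at eg
    exact left_eq_mul.mp eg
  refine ⟨μ, ?_⟩
  simp only [Prod.mk.injEq]
  rw [← eμ, ← eg, hg, ← eν, hνμ]
  exact ⟨rfl, rfl, rfl⟩

theorem exists_of_mem_smul_of_subset_diagTriples {SS : SelfSimilar k G Λ}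
    {F E : Set (Λ.Path × G × Λ.Path)} (hE : E ⊆ diagTriples Λ G) {t : Λ.Path × G × Λ.Path}
    (ht : t ∈ smul SS F E) :
    ∃ μ g ν η α β, (μ, g, ν) ∈ F ∧ (η, (1 : G), η) ∈ E ∧ (α, β) ∈ Λ.lmin ν η ∧
      ∃ (h1 : Λ.src μ = Λ.rng (SS.act g α)) (h2 : Λ.src η = Λ.rng β),
        t = (Λ.comp μ (SS.act g α) h1, SS.φ g α, Λ.comp η β h2) := by
  obtain ⟨μ, g, ν, ξ, h, η, α, β, hμ, hξ, hab, h1, h2, rfl⟩ := ht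
  obtain ⟨η', he⟩ := hE hξ
  simp only [Prod.mk.injEq] at he
  obtain ⟨rfl, rfl, rfl⟩ := he
  have hβ : SS.act 1⁻¹ β = β := by rw [inv_one, SS.act_one]
  refine ⟨μ, g, ν, η', α, β, hμ, hξ, hab, h1, hβ ▸ h2, ?_⟩
  rw [SS.φ_one, mul_one, comp_congr rfl hβ h2 (hβ ▸ h2)]

def ExtendsByFixed (SS : SelfSimilar k G Λ) (g : G) (ξ μ : Λ.Path) : Prop :=
  ∃ τ, ∃ h : Λ.src ξ = Λ.rng τ, StronglyFixed SS g τ ∧ μ = Λ.comp ξ τ h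

theorem extendsByFixed_self (SS : SelfSimilar k G Λ) (μ : Λ.Path) : ExtendsByFixed SS 1 μ μ :=
  ⟨Λ.src μ, (Λ.rng_vtx _ (Λ.deg_src μ)).symm, ⟨SS.act_one _, SS.φ_one _⟩,
    (Λ.comp_src_id _ _).symm⟩

theorem exists_extendsByFixed_of_mem_smul {SS : SelfSimilar k G Λ}
    {F E : Set (Λ.Path × G × Λ.Path)} (hE : E ⊆ diagTriples Λ G) {μ : Λ.Path}
    (hμ : (μ, 1, μ) ∈ smul SS F E) :
    ∃ ξ g, (ξ, g, ξ) ∈ F ∧ ExtendsByFixed SS g ξ μ := by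
  obtain ⟨ξ, g, ν, η, α, β, hξ, -, ⟨hα, hβ, habeq, -⟩, h1, h2, he⟩ :=
    exists_of_mem_smul_of_subset_diagTriples hE hμ
  dsimp only at hα hβ habeq
  simp only [Prod.mk.injEq] at he
  obtain ⟨e1, hφ, e3⟩ := he
  have e4 : Λ.comp ξ (SS.act g α) h1 = Λ.comp ν α hα := by rw [← e1, e3, habeq]
  have hdeg : Λ.deg ξ = Λ.deg ν := by
    have hd := congrArg Λ.deg e4
    rw [Λ.deg_comp, Λ.deg_comp, SS.deg_act] at hd
    exact add_right_cancel hd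
  obtain ⟨rfl, hact⟩ := comp_inj hdeg e4
  exact ⟨ξ, g, hξ, α, hα, ⟨hact, hφ.symm⟩, e1.trans e4⟩

theorem mem_smul_of_extendsByFixed (SS : SelfSimilar k G Λ) {F E : Set (Λ.Path × G × Λ.Path)}
    {μ ξ : Λ.Path} {g : G} (hμ : (μ, 1, μ) ∈ E) (hξ : (ξ, g, ξ) ∈ F)
    (hext : ExtendsByFixed SS g ξ μ) : (μ, 1, μ) ∈ smul SS F E := by
  obtain ⟨τ, hτ, ⟨hact, hφ⟩, rfl⟩ := hext
  have h1 : Λ.src ξ = Λ.rng (SS.act g τ) := by rw [hact]; exact hτ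
  have hv : Λ.deg (SS.act 1⁻¹ (Λ.src τ)) = 0 := by rw [SS.deg_act, Λ.deg_src]
  have h2 : Λ.src (Λ.comp ξ τ hτ) = Λ.rng (SS.act 1⁻¹ (Λ.src τ)) := by
    rw [Λ.rng_vtx _ hv, inv_one, SS.act_one, Λ.src_comp]
  refine ⟨ξ, g, ξ, _, 1, _, τ, Λ.src τ, hξ, hμ, mem_lmin_comp ξ τ hτ, h1, h2, ?_⟩
  simp only [Prod.mk.injEq]
  exact ⟨comp_congr rfl hact.symm _ _, by rw [hφ, SS.φ_one, one_mul],
    (comp_of_deg_eq_zero hv h2).symm⟩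

theorem smul_subset_of_forall_extendsByFixed {SS : SelfSimilar k G Λ}
    {F E : Set (Λ.Path × G × Λ.Path)} (hF : F.Pairwise (Orth Λ)) (hE : E ⊆ diagTriples Λ G)
    (h : ∀ t ∈ E, ∃ ξ g, (ξ, g, ξ) ∈ F ∧ ExtendsByFixed SS g ξ t.1) :
    smul SS F E ⊆ E := by
  intro u hu
  obtain ⟨μ, g, ν, η, α, β, hμF, hηE, hab, h1, h2, rfl⟩ :=
    exists_of_mem_smul_of_subset_diagTriples hE hu
  obtain ⟨ξ, g₀, hξF, τ, hτ, ⟨hact, hφ⟩, rfl⟩ := h _ hηE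
  obtain ⟨hα, hβ, habeq, hd⟩ := hab
  dsimp only at hα hβ habeq
  have hτβ : Λ.src τ = Λ.rng β := by rw [← Λ.src_comp ξ τ hτ]; exact hβ
  have hξτβ : Λ.src ξ = Λ.rng (Λ.comp τ β hτβ) := by rw [Λ.rng_comp]; exact hτ
  have hν : (μ, g, ν) = (ξ, g₀, ξ) :=
    hF.eq_of_lmin_snd_nonempty hμF hξF <| lmin_nonempty_of_comp_eq <|
      habeq.trans (Λ.comp_assoc ξ τ β hτ hβ hτβ hξτβ)
  simp only [Prod.mk.injEq] at hν
  obtain ⟨rfl, rfl, rfl⟩ := hν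
  obtain ⟨rfl, hdβ⟩ := eq_of_mem_lmin_comp ⟨hα, hβ, habeq, hd⟩
  convert hηE using 1
  simp only [Prod.mk.injEq]
  exact ⟨comp_congr rfl hact _ _, hφ, comp_of_deg_eq_zero hdβ h2⟩

theorem eq_of_extendsByFixed {SS : SelfSimilar k G Λ} {F : Set (Λ.Path × G × Λ.Path)}
    (hF : F.Pairwise (Orth Λ)) {ξ ξ' μ : Λ.Path} {g g' : G} (hξ : (ξ, g, ξ) ∈ F)
    (hξ' : (ξ', g', ξ') ∈ F) (h : ExtendsByFixed SS g ξ μ) (h' : ExtendsByFixed SS g' ξ' μ) :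
    ξ = ξ' ∧ g = g' := by
  obtain ⟨τ, hτ, -, rfl⟩ := h
  obtain ⟨τ', hτ', -, he⟩ := h'
  have e := hF.eq_of_lmin_fst_nonempty hξ hξ' (lmin_nonempty_of_comp_eq he)
  simp only [Prod.mk.injEq] at e
  exact ⟨e.1, e.2.1⟩

theorem smul_iota_eq_iota {SS : SelfSimilar k G Λ} {μ ξ : Λ.Path} {g : G}
    (hext : ExtendsByFixed SS g ξ μ) : smul SS {(ξ, g, ξ)} (iota Λ G μ) = iota Λ G μ := by
  refine (smul_subset_of_forall_extendsByFixed (Set.pairwise_singleton _ _)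
    (iota_subset_diagTriples μ) ?_).antisymm ?_
  · rintro t rfl
    exact ⟨ξ, g, rfl, hext⟩
  · exact Set.singleton_subset_iff.mpr (mem_smul_of_extendsByFixed SS rfl rfl hext)

theorem iota_isIdem (SS : SelfSimilar k G Λ) (μ : Λ.Path) : IsIdem SS (iota Λ G μ) := by
  refine ⟨⟨Set.finite_singleton _, ?_, Set.pairwise_singleton _ _⟩,
    smul_iota_eq_iota (extendsByFixed_self SS μ)⟩
  rintro t rfl
  exact (SS.act_one _).symm

theorem leS_iota_iff (SS : SelfSimilar k G Λ) (μ ξ : Λ.Path) (g : G) :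
    leS SS (iota Λ G μ) {(ξ, g, ξ)} ↔ ExtendsByFixed SS g ξ μ := by
  constructor
  · rintro ⟨E, hE, hsm⟩
    have hμ : (μ, (1 : G), μ) ∈ smul SS {(ξ, g, ξ)} E := hsm ▸ rfl
    obtain ⟨ξ', g', hξ', hext⟩ :=
      exists_extendsByFixed_of_mem_smul (subset_diagTriples_of_smul_self hE.1.2.2 hE.2) hμ
    simp only [Set.mem_singleton_iff, Prod.mk.injEq] at hξ'
    obtain ⟨rfl, rfl, -⟩ := hξ'
    exact hext
  · exact fun hext => ⟨iota Λ G μ, iota_isIdem SS μ, smul_iota_eq_iota hext⟩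

theorem stmt7_general (SS : SelfSimilar k G Λ)
    (F E : Set (Λ.Path × G × Λ.Path)) (hF : IsElem SS F) (hE : IsIdem SS E) :
    smul SS F E = E ↔
      ∀ t ∈ E, ∃! p : Λ.Path × G,
        (p.1, p.2, p.1) ∈ F ∧ leS SS (iota Λ G t.1) {(p.1, p.2, p.1)} := by
  have hdiag := subset_diagTriples_of_smul_self hE.1.2.2 hE.2
  simp_rw [leS_iota_iff]
  constructor
  · intro hFE t ht
    obtain ⟨μ, rfl⟩ := hdiag ht
    obtain ⟨ξ, g, hξ, hext⟩ := exists_extendsByFixed_of_mem_smul hdiag (hFE.symm ▸ ht)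
    exact ⟨(ξ, g), ⟨hξ, hext⟩, fun q hq => Prod.ext_iff.mpr
      (eq_of_extendsByFixed hF.2.2 hq.1 hξ hq.2 hext)⟩
  · intro h
    have hex : ∀ t ∈ E, ∃ ξ g, (ξ, g, ξ) ∈ F ∧ ExtendsByFixed SS g ξ t.1 := fun t ht =>
      let ⟨p, hp, _⟩ := h t ht
      ⟨p.1, p.2, hp⟩
    refine (smul_subset_of_forall_extendsByFixed hF.2.2 hdiag hex).antisymm ?_
    intro t ht
    obtain ⟨μ, rfl⟩ := hdiag ht
    obtain ⟨ξ, g, hξ, hext⟩ := hex _ ht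
    exact mem_smul_of_extendsByFixed SS ht hξ hext

/-- for `E ∈ E(S_{G,Λ})` and `F ∈ S_{G,Λ}`, `E ≤ F` (i.e. `FE=E`)
iff for every `(μ,e_G,μ) ∈ E` there is a unique triple of the form
`(ξ,g,ξ) ∈ F` with `{(μ,e_G,μ)} ≤ {(ξ,g,ξ)}`. -/
theorem stmt7 (SS : SelfSimilar k G Λ) (hfa : Λ.FinitelyAligned)
    (F E : Set (Λ.Path × G × Λ.Path)) (hF : IsElem SS F) (hE : IsIdem SS E) :
    smul SS F E = E ↔
      ∀ t ∈ E, ∃! p : Λ.Path × G,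
        (p.1, p.2, p.1) ∈ F ∧ leS SS (iota Λ G t.1) {(p.1, p.2, p.1)} :=
  stmt7_general SS F E hF hE
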